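/- arXiv:1509.04961 — 2 statements merged into one kernel-verified Lean document; each statement's English description precedes it below -/
import Mathlib

section
/- Let Λ be a path-connected topological space, λ₀ ∈ Λ, and σ : Λ → ℝ a continuous function that crosses 0 at λ₀ (i.e. σ(λ₀) = 0 and every neighbourhood of λ₀ contains points λ₁, λ₂ with σ(λ₁) > 0 and σ(λ₂) < 0). Let c : Λ × ℝ → ℝ be continuous. Then there exists a neighbourhood V of 0 in ℝ such that for every y ∈ V there exists λ ∈ Λ with y·σ(λ) + y²·c(λ, y) = 0 and, when y ≠ 0, σ(λ) + y·c(λ, y) = 0. -/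
/-!
Since `σ` takes a positive value at some `l₊` and a negative value at some `l₋`, the perturbed
function `l ↦ σ l + y * c (l, y)` keeps these signs at `l₊` and `l₋` for all `y` near `0`, and
then has a zero by the intermediate value theorem on the connected space `Λ`. At such a zero
`y * σ l + y ^ 2 * c (l, y) = y * (σ l + y * c (l, y))` vanishes as well.
-/

open Topology Filter

theorem tendsto_add_mul_nhds_zero {g : ℝ → ℝ} (hg : ContinuousAt g 0) (a : ℝ) :
    Tendsto (fun y => a + y * g y) (𝓝 0) (𝓝 a) := by
  have h : ContinuousAt (fun y => a + y * g y) 0 :=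
    continuousAt_const.add (continuousAt_id.mul hg)
  simpa using h.tendsto

theorem PreconnectedSpace.exists_eq_zero_of_neg_of_pos {X : Type*} [TopologicalSpace X]
    [PreconnectedSpace X] {f : X → ℝ} (hf : Continuous f) {a b : X} (ha : f a < 0)
    (hb : 0 < f b) : ∃ x, f x = 0 :=
  intermediate_value_univ a b hf ⟨ha.le, hb.le⟩

theorem crossing_eigenvalue_solutions_general
    {Λ : Type*} [TopologicalSpace Λ] [PathConnectedSpace Λ]
    (lam₀ : Λ) (σ : Λ → ℝ) (hσ : Continuous σ)
    (hcross : ∀ U ∈ 𝓝 lam₀, (∃ l₁ ∈ U, 0 < σ l₁) ∧ (∃ l₂ ∈ U, σ l₂ < 0))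
    (c : Λ × ℝ → ℝ) (hc : Continuous c) :
    ∃ V ∈ 𝓝 (0 : ℝ), ∀ y ∈ V,
      ∃ l : Λ, y * σ l + y ^ 2 * c (l, y) = 0 ∧
        (y ≠ 0 → σ l + y * c (l, y) = 0) := by
  obtain ⟨⟨lp, -, hp⟩, ⟨lm, -, hm⟩⟩ := hcross Set.univ univ_mem
  have hc_slice (l : Λ) : ContinuousAt (fun y => c (l, y)) 0 :=
    (hc.comp (Continuous.prodMk_right l)).continuousAt
  have hneg := (tendsto_add_mul_nhds_zero (hc_slice lm) (σ lm)).eventually (gt_mem_nhds hm)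
  have hpos := (tendsto_add_mul_nhds_zero (hc_slice lp) (σ lp)).eventually (lt_mem_nhds hp)
  refine ⟨_, hneg.and hpos, fun y ⟨hy_neg, hy_pos⟩ => ?_⟩
  have hf : Continuous fun l => σ l + y * c (l, y) :=
    hσ.add (continuous_const.mul (hc.comp (continuous_id.prodMk continuous_const)))
  obtain ⟨l, hl⟩ := PreconnectedSpace.exists_eq_zero_of_neg_of_pos hf hy_neg hy_pos
  refine ⟨l, ?_, fun _ => hl⟩
  linear_combination y * hl

/-- If `σ` crosses 0 at `λ₀` on a path-connected space `Λ` and `c` is continuous,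
then for every `y` in some neighbourhood of `0` there is `λ ∈ Λ` with
`y·σ(λ) + y²·c(λ, y) = 0`, and moreover `σ(λ) + y·c(λ, y) = 0` when `y ≠ 0`. -/
theorem crossing_eigenvalue_solutions
    {Λ : Type*} [TopologicalSpace Λ] [PathConnectedSpace Λ]
    (lam₀ : Λ) (σ : Λ → ℝ) (hσ : Continuous σ)
    (hzero : σ lam₀ = 0)
    (hcross : ∀ U ∈ 𝓝 lam₀, (∃ l₁ ∈ U, 0 < σ l₁) ∧ (∃ l₂ ∈ U, σ l₂ < 0))
    (c : Λ × ℝ → ℝ) (hc : Continuous c) :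
    ∃ V ∈ 𝓝 (0 : ℝ), ∀ y ∈ V,
      ∃ l : Λ, y * σ l + y ^ 2 * c (l, y) = 0 ∧
        (y ≠ 0 → σ l + y * c (l, y) = 0) :=
  crossing_eigenvalue_solutions_general lam₀ σ hσ hcross c hc
end

section
/- Let f : ℝⁿ → ℝ be a smooth function which is invariant under a linear action of a compact Lie group H on ℝⁿ (f(h·x) = f(x) for all h ∈ H, x ∈ ℝⁿ). If x is a fixed point of the H-action (h·x = x for all h ∈ H), then the gradient ∇f(x) lies in the fixed-point subspace (ℝⁿ)^H. Consequently, if the restriction of f to the fixed-point subspace (ℝⁿ)^H has a critical point at x ∈ (ℝⁿ)^H, then x is a critical point of f on all of ℝⁿ. -/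
/-- Principle of Symmetric Criticality (linear setting): if `f` is invariant under
an orthogonal action of a compact group `H` and `x` is a fixed point, then
`∇f(x)` lies in the fixed-point subspace; consequently, if `x` is a critical point
of the restriction of `f` to the fixed-point subspace, it is a critical point of `f`. -/
theorem principle_of_symmetric_criticality
    {n : ℕ} {H : Type*} [Group H] [TopologicalSpace H] [CompactSpace H]
    (ρ : H →* (EuclideanSpace ℝ (Fin n) ≃ₗᵢ[ℝ] EuclideanSpace ℝ (Fin n)))
    (f : EuclideanSpace ℝ (Fin n) → ℝ) (hf : ContDiff ℝ (⊤ : ℕ∞) f)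
    (hinv : ∀ (h : H) (y : EuclideanSpace ℝ (Fin n)), f (ρ h y) = f y)
    (x : EuclideanSpace ℝ (Fin n)) (hx : ∀ h : H, ρ h x = x) :
    (∀ h : H, ρ h (gradient f x) = gradient f x) ∧
    ((∀ v : EuclideanSpace ℝ (Fin n), (∀ h : H, ρ h v = v) → fderiv ℝ f x v = 0) →
      fderiv ℝ f x = 0) := by
  -- key: the differential at x is invariant under precomposition with ρ h
  have key : ∀ (h : H) (v : EuclideanSpace ℝ (Fin n)),
      fderiv ℝ f x (ρ h v) = fderiv ℝ f x v := by
    intro h v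
    have hcomp : f ∘ (ρ h).toContinuousLinearEquiv = f := by
      funext y; exact hinv h y
    have := ((ρ h).toContinuousLinearEquiv).comp_right_fderiv (f := f) (x := x)
    rw [hcomp] at this
    have hx' : ((ρ h).toContinuousLinearEquiv : EuclideanSpace ℝ (Fin n) →
        EuclideanSpace ℝ (Fin n)) x = x := hx h
    rw [show ((ρ h).toContinuousLinearEquiv) x = x from hx h] at this
    conv_rhs => rw [this]
    rfl
  -- fderiv f x v = ⟪∇f x, v⟫
  have hgrad : ∀ v, fderiv ℝ f x v = inner ℝ (gradient f x) v := by
    intro v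
    rw [gradient]
    rw [InnerProductSpace.toDual_symm_apply]
  have part1 : ∀ h : H, ρ h (gradient f x) = gradient f x := by
    intro h
    apply ext_inner_right ℝ
    intro v
    have h1 : (inner ℝ (ρ h (gradient f x)) v : ℝ)
        = inner ℝ (gradient f x) ((ρ h).symm v) := by
      rw [← (ρ h).inner_map_map (gradient f x) ((ρ h).symm v)]
      simp
    have h2 : ((ρ h).symm : EuclideanSpace ℝ (Fin n) → EuclideanSpace ℝ (Fin n)) v
        = ρ h⁻¹ v := by
      rw [map_inv]; rfl
    rw [h1, h2, ← hgrad, key, hgrad]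
  refine ⟨part1, fun hcrit => ?_⟩
  have hg0 : gradient f x = 0 := by
    have := hcrit (gradient f x) part1
    rw [hgrad] at this
    exact inner_self_eq_zero.mp this
  ext v
  rw [hgrad, hg0, inner_zero_left]
  simp
end
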